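/- Let f = (f_1,…,f_n) be polynomials in R[x] with each deg f_i ≥ 1, δ_f = Σ_{i=1}^n (deg f_i − 1), and let δ_1, δ_2 ≥ 0 be integers. For i = 1,2 let L_i and L_i' be R-linear functionals on R[x] such that L_i and L_i' both annul (f)^{≤δ_f+δ_i}_x and L_i' agrees with L_i on all polynomials of total degree ≤ δ_f + δ_i. Fix monotonous difference derivatives ∇f_i of the f_i and, for F ∈ R[x], a monotonous difference derivative ∇F. Then for every F of total degree ≤ δ_f + δ_1 + δ_2 + 1: L_1'(x_*).( L_2'(y_*).det‖∇f ∇F; f(x) F(x)‖ ) = L_1(x_*).( L_2(y_*).det‖∇f ∇F; f(x) F(x)‖ ), i.e. the extended functional on R[x^{≤δ_f+δ_1+δ_2+1}] depends only on the restrictions of L_1 to R[x^{≤δ_f+δ_1}] and of L_2 to R[x^{≤δ_f+δ_2}]. -/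

import Mathlib

/-!
Write `G = (f₁, …, fₙ, F)` and expand the determinant along its last row:
`det = ∑ⱼ Gⱼ(x) Nⱼ(x,y)`, where the cofactor `Nⱼ` involves only the difference derivatives.
Subtracting `∑ₖ (xₖ - yₖ) · (row k)` from the last row turns it into `G(y)`, so also
`det = ∑ⱼ Gⱼ(y) Nⱼ(x,y)`. Monotonicity bounds the degrees in column `j` by `cⱼ = deg fⱼ - 1`,
and by `c = δ_f + δ₁ + δ₂` in the `F`-column, so `deg Nⱼ ≤ ∑ c - cⱼ`.

* By the `G(y)`-expansion, for every `L` annulling `(f)^{≤δ_f+δ₂}` the polynomial `L(y_*).det`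
  has degree `≤ δ_f + δ₁`: a monomial `x^a y^b` of `Nⱼ` with `deg fⱼ + |b| ≤ δ_f + δ₂`
  is killed, and the others have small `|a|`. So `L₁'` may be replaced by `L₁`.
* By the `G(x)`-expansion, `(L₂' - L₂)(y_*).det` lies in `(f)^{≤δ_f+δ₁}`, because `L₂' - L₂`
  kills all `y^b` with `|b| ≤ δ_f + δ₂`; hence `L₁` kills it.
-/

open MvPolynomial Finset

noncomputable section

variable {R : Type*} [CommRing R] {n : ℕ}

/-- Total degree of a multivariate polynomial, valued in `WithBot ℤ`,
with the convention `deg 0 = ⊥` (i.e. `-∞`). -/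
def mdeg {σ S : Type*} [CommSemiring S] (F : MvPolynomial σ S) : WithBot ℤ :=
  F.support.sup fun m => ((m.sum fun _ e => e : ℕ) : ℤ)

/-- The embedding `R[x] → R[x,y]`, `x_i ↦ x_i` (the x-variables are `Sum.inl`,
the y-variables are `Sum.inr`). -/
def toX : MvPolynomial (Fin n) R →ₐ[R] MvPolynomial (Fin n ⊕ Fin n) R :=
  rename Sum.inl

/-- The embedding `R[x] → R[x,y]`, `x_i ↦ y_i`. -/
def toY : MvPolynomial (Fin n) R →ₐ[R] MvPolynomial (Fin n ⊕ Fin n) R :=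
  rename Sum.inr

/-- `D = (∇¹F, …, ∇ⁿF)` is a difference derivative of `F`:
`∑ k, (x_k - y_k) * ∇ᵏF(x,y) = F(x) - F(y)`. -/
def IsDiffDeriv (F : MvPolynomial (Fin n) R)
    (D : Fin n → MvPolynomial (Fin n ⊕ Fin n) R) : Prop :=
  ∑ k : Fin n, (X (Sum.inl k) - X (Sum.inr k)) * D k = toX F - toY F

/-- A difference derivative of `F` is monotonous if each component has total degree
`≤ deg F - 1` (equivalently `deg (∇ᵏF) + 1 ≤ deg F` in `WithBot ℤ`). -/
def IsMonotonous (F : MvPolynomial (Fin n) R)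
    (D : Fin n → MvPolynomial (Fin n ⊕ Fin n) R) : Prop :=
  ∀ k, mdeg (D k) + 1 ≤ mdeg F

/-- `δ_f = ∑ᵢ (deg fᵢ - 1)`. -/
def deltaF (f : Fin n → MvPolynomial (Fin n) R) : ℤ :=
  ∑ i, (((f i).totalDegree : ℤ) - 1)

/-- `(f)^{≤ d}_x`: sums `∑ fᵢ gᵢ` with `deg fᵢ + deg gᵢ ≤ d` for every `i`. -/
def boundedSpan (f : Fin n → MvPolynomial (Fin n) R) (d : WithBot ℤ) :
    Set (MvPolynomial (Fin n) R) :=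
  {F | ∃ g : Fin n → MvPolynomial (Fin n) R,
    F = ∑ i, f i * g i ∧ ∀ i, mdeg (f i) + mdeg (g i) ≤ d}

/-- A linear functional `L` annuls a set `S` if it vanishes on it. -/
def Annuls (L : MvPolynomial (Fin n) R →ₗ[R] R) (S : Set (MvPolynomial (Fin n) R)) : Prop :=
  ∀ F ∈ S, L F = 0

/-- `L(y_*).P` : apply the functional `L` to the `y`-part of `P ∈ R[x,y]`,
i.e. if `P = ∑_α A_α(x) y^α` then `L(y_*).P = ∑_α L(y^α) • A_α(x)`. -/
def applyY (L : MvPolynomial (Fin n) R →ₗ[R] R) (P : MvPolynomial (Fin n ⊕ Fin n) R) :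
    MvPolynomial (Fin n) R :=
  ∑ m ∈ P.support,
    C (L (monomial (Finsupp.sumFinsuppAddEquivProdFinsupp m).2 (1 : R)) * P.coeff m) *
      monomial (Finsupp.sumFinsuppAddEquivProdFinsupp m).1 (1 : R)

/-- `det‖∇f(x,y) ∇F(x,y); f(x) F(x)‖` : the `(n+1) × (n+1)` determinant whose entry `(k,i)`
is `∇ᵏfᵢ(x,y)` for `k, i ≤ n`, entry `(k, n+1)` is `∇ᵏF(x,y)`, entry `(n+1, i)` is `fᵢ(x)`,
and entry `(n+1, n+1)` is `F(x)`.  Here `Df i` is the tuple `(∇¹fᵢ, …, ∇ⁿfᵢ)`. -/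
def ddetX (f : Fin n → MvPolynomial (Fin n) R)
    (Df : Fin n → Fin n → MvPolynomial (Fin n ⊕ Fin n) R)
    (F : MvPolynomial (Fin n) R) (DF : Fin n → MvPolynomial (Fin n ⊕ Fin n) R) :
    MvPolynomial (Fin n ⊕ Fin n) R :=
  Matrix.det (Matrix.of fun k i : Fin (n + 1) =>
    if hk : (k : ℕ) < n then
      if hi : (i : ℕ) < n then Df ⟨i, hi⟩ ⟨k, hk⟩ else DF ⟨k, hk⟩
    else
      if hi : (i : ℕ) < n then toX (f ⟨i, hi⟩) else toX F)

/-- `det‖∇f(x,y) ∇F(x,y); f(y) F(y)‖` : as `ddetX` but with last row `(f₁(y),…,fₙ(y),F(y))`. -/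
def ddetY (f : Fin n → MvPolynomial (Fin n) R)
    (Df : Fin n → Fin n → MvPolynomial (Fin n ⊕ Fin n) R)
    (F : MvPolynomial (Fin n) R) (DF : Fin n → MvPolynomial (Fin n ⊕ Fin n) R) :
    MvPolynomial (Fin n ⊕ Fin n) R :=
  Matrix.det (Matrix.of fun k i : Fin (n + 1) =>
    if hk : (k : ℕ) < n then
      if hi : (i : ℕ) < n then Df ⟨i, hi⟩ ⟨k, hk⟩ else DF ⟨k, hk⟩
    else
      if hi : (i : ℕ) < n then toY (f ⟨i, hi⟩) else toY F)

section Degree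

variable {σ R : Type*} [CommSemiring R]

variable (σ R) in
/-- The bound is an integer so that, as with `mdeg 0 = ⊥`, a negative bound forces the zero
polynomial. -/
def degreeLE (d : ℤ) : Submodule R (MvPolynomial σ R) :=
  restrictSupport R {m | (m.degree : ℤ) ≤ d}

lemma mem_degreeLE {P : MvPolynomial σ R} {d : ℤ} :
    P ∈ degreeLE σ R d ↔ ∀ m ∈ P.support, (m.degree : ℤ) ≤ d := by
  rw [degreeLE, mem_restrictSupport_iff]
  rfl

lemma mdeg_le_coe_iff {P : MvPolynomial σ R} {d : ℤ} :
    mdeg P ≤ (d : WithBot ℤ) ↔ P ∈ degreeLE σ R d := by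
  rw [mdeg, Finset.sup_le_iff, mem_degreeLE]
  simp only [WithBot.coe_le_coe, Finsupp.degree_apply]
  rfl

lemma degreeLE_mono {d e : ℤ} (h : d ≤ e) : degreeLE σ R d ≤ degreeLE σ R e :=
  restrictSupport_mono R fun _ hm => le_trans hm h

lemma monomial_mem_degreeLE {m : σ →₀ ℕ} {d : ℤ} (hm : (m.degree : ℤ) ≤ d) (c : R) :
    monomial m c ∈ degreeLE σ R d :=
  (monomial_mem_restrictSupport R).2 (Or.inl hm)

lemma mem_degreeLE_totalDegree (P : MvPolynomial σ R) :
    P ∈ degreeLE σ R P.totalDegree :=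
  mem_degreeLE.2 fun _ hm => by exact_mod_cast P.le_totalDegree hm

lemma eq_zero_of_mem_degreeLE_of_neg {P : MvPolynomial σ R} {d : ℤ}
    (hP : P ∈ degreeLE σ R d) (hd : d < 0) : P = 0 := by
  by_contra h
  obtain ⟨m, hm⟩ := support_nonempty.2 h
  have := mem_degreeLE.1 hP m hm
  omega

lemma mul_mem_degreeLE {P Q : MvPolynomial σ R} {a b : ℤ}
    (hP : P ∈ degreeLE σ R a) (hQ : Q ∈ degreeLE σ R b) : P * Q ∈ degreeLE σ R (a + b) := by
  classical
  refine mem_degreeLE.2 fun m hm => ?_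
  obtain ⟨u, hu, v, hv, rfl⟩ := Finset.mem_add.1 (support_mul P Q hm)
  rw [map_add, Nat.cast_add]
  exact add_le_add (mem_degreeLE.1 hP u hu) (mem_degreeLE.1 hQ v hv)

lemma prod_mem_degreeLE {ι : Type*} (s : Finset ι) {P : ι → MvPolynomial σ R} {c : ι → ℤ}
    (h : ∀ i ∈ s, P i ∈ degreeLE σ R (c i)) : ∏ i ∈ s, P i ∈ degreeLE σ R (∑ i ∈ s, c i) := by
  classical
  induction s using Finset.induction_on with
  | empty => simpa using monomial_mem_degreeLE (m := 0) (by simp) (1 : R)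
  | insert i s hi ih =>
    rw [prod_insert hi, sum_insert hi]
    exact mul_mem_degreeLE (h i (mem_insert_self i s))
      (ih fun j hj => h j (mem_insert_of_mem hj))

end Degree

section DegreeRing

variable {σ R : Type*} [CommRing R]

lemma det_mem_degreeLE {ι : Type*} [Fintype ι] [DecidableEq ι]
    (A : Matrix ι ι (MvPolynomial σ R)) (c : ι → ℤ) (h : ∀ k j, A k j ∈ degreeLE σ R (c j)) :
    A.det ∈ degreeLE σ R (∑ j, c j) := by
  rw [Matrix.det_apply]
  exact Submodule.sum_mem _ fun τ _ =>
    Submodule.smul_of_tower_mem _ _ (prod_mem_degreeLE _ fun j _ => h (τ j) j)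

lemma neg_one_pow_mul_mem_degreeLE {P : MvPolynomial σ R} {d : ℤ} (hP : P ∈ degreeLE σ R d)
    (k : ℕ) : (-1) ^ k * P ∈ degreeLE σ R d := by
  rcases neg_one_pow_eq_or (MvPolynomial σ R) k with h | h
  · rwa [h, one_mul]
  · rwa [h, neg_one_mul, neg_mem_iff]

end DegreeRing

lemma IsMonotonous.mem_degreeLE {F : MvPolynomial (Fin n) R}
    {D : Fin n → MvPolynomial (Fin n ⊕ Fin n) R} (hD : IsMonotonous F D) {d : ℤ}
    (hF : mdeg F ≤ ((d + 1 : ℤ) : WithBot ℤ)) (k : Fin n) : D k ∈ degreeLE _ R d := by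
  rw [← mdeg_le_coe_iff]
  have h := (hD k).trans hF
  generalize mdeg (D k) = x at h ⊢
  induction x using WithBot.recBotCoe with
  | bot => exact bot_le
  | coe a =>
    norm_cast at h ⊢
    omega

section ApplyY

variable (L : MvPolynomial (Fin n) R →ₗ[R] R)

open Finsupp (sumFinsuppAddEquivProdFinsupp)

lemma degree_sumFinsuppAddEquivProdFinsupp {α β M : Type*} [Fintype α] [Fintype β]
    [AddCommMonoid M] (m : α ⊕ β →₀ M) :
    (sumFinsuppAddEquivProdFinsupp m).1.degree + (sumFinsuppAddEquivProdFinsupp m).2.degree =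
      m.degree := by
  simp only [Finsupp.degree_eq_sum, Fintype.sum_sum_type]
  rfl

lemma toX_monomial_mul_toY_monomial (a b : Fin n →₀ ℕ) (c e : R) :
    toX (monomial a c) * toY (monomial b e) =
      monomial (sumFinsuppAddEquivProdFinsupp.symm (a, b)) (c * e) := by
  rw [toX, toY, rename_monomial, rename_monomial, monomial_mul,
    Finsupp.sumFinsuppAddEquivProdFinsupp_symm_apply, Finsupp.sumElim_eq_add]

lemma monomial_eq_toX_mul_toY (m : Fin n ⊕ Fin n →₀ ℕ) (c : R) :
    monomial m c = toX (monomial (sumFinsuppAddEquivProdFinsupp m).1 c) *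
      toY (monomial (sumFinsuppAddEquivProdFinsupp m).2 1) := by
  rw [toX_monomial_mul_toY_monomial, mul_one, Prod.mk.eta, AddEquiv.symm_apply_apply]

lemma applyY_eq_sum (P : MvPolynomial (Fin n ⊕ Fin n) R) :
    applyY L P = (AddMonoidAlgebra.coeff P).sum fun m c =>
      C (L (monomial (sumFinsuppAddEquivProdFinsupp m).2 1) * c) *
        monomial (sumFinsuppAddEquivProdFinsupp m).1 1 := by
  rw [sum_def]; rfl

lemma applyY_monomial (m : Fin n ⊕ Fin n →₀ ℕ) (c : R) :
    applyY L (monomial m c) =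
      C (L (monomial (sumFinsuppAddEquivProdFinsupp m).2 1) * c) *
        monomial (sumFinsuppAddEquivProdFinsupp m).1 1 := by
  rw [applyY_eq_sum, sum_monomial_eq (by simp)]

lemma applyY_add (P Q : MvPolynomial (Fin n ⊕ Fin n) R) :
    applyY L (P + Q) = applyY L P + applyY L Q := by
  simp only [applyY_eq_sum, AddMonoidAlgebra.coeff_add]
  exact Finsupp.sum_add_index' (by simp) fun _ _ _ => by simp only [mul_add, map_add, add_mul]

lemma applyY_sum {ι : Type*} (s : Finset ι) (P : ι → MvPolynomial (Fin n ⊕ Fin n) R) :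
    applyY L (∑ i ∈ s, P i) = ∑ i ∈ s, applyY L (P i) :=
  map_sum (AddMonoidHom.mk' (applyY L) (applyY_add L)) P s

lemma applyY_sub (L' : MvPolynomial (Fin n) R →ₗ[R] R) (P : MvPolynomial (Fin n ⊕ Fin n) R) :
    applyY (L - L') P = applyY L P - applyY L' P := by
  simp only [applyY, LinearMap.sub_apply, sub_mul, map_sub, Finset.sum_sub_distrib]

lemma applyY_toX_mul_toY (A B : MvPolynomial (Fin n) R) :
    applyY L (toX A * toY B) = L B • A := by
  induction A using MvPolynomial.induction_on' with
  | monomial a c =>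
    induction B using MvPolynomial.induction_on' with
    | monomial b e =>
      have hb : monomial b e = e • monomial b (1 : R) := by
        rw [smul_monomial, smul_eq_mul, mul_one]
      rw [toX_monomial_mul_toY_monomial, applyY_monomial, AddEquiv.apply_symm_apply,
        C_mul_monomial, hb, map_smul, smul_monomial, smul_eq_mul, smul_eq_mul]
      ring_nf
    | add B B' hB hB' => rw [map_add, mul_add, applyY_add, hB, hB', map_add, add_smul]
  | add A A' hA hA' => rw [map_add, add_mul, applyY_add, hA, hA', smul_add]

lemma applyY_toX_mul (A : MvPolynomial (Fin n) R) (P : MvPolynomial (Fin n ⊕ Fin n) R) :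
    applyY L (toX A * P) = A * applyY L P := by
  induction P using MvPolynomial.induction_on' with
  | monomial m c =>
    rw [monomial_eq_toX_mul_toY, ← mul_assoc, ← map_mul, applyY_toX_mul_toY,
      applyY_toX_mul_toY, mul_smul_comm]
  | add P Q hP hQ => rw [mul_add, applyY_add, applyY_add, hP, hQ, mul_add]

lemma applyY_toY_mul (G : MvPolynomial (Fin n) R) (P : MvPolynomial (Fin n ⊕ Fin n) R) :
    applyY L (toY G * P) = applyY (L ∘ₗ LinearMap.mulLeft R G) P := by
  induction P using MvPolynomial.induction_on' with
  | monomial m c =>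
    rw [monomial_eq_toX_mul_toY, mul_left_comm, ← map_mul, applyY_toX_mul_toY,
      applyY_toX_mul_toY, LinearMap.comp_apply, LinearMap.mulLeft_apply]
  | add P Q hP hQ => rw [mul_add, applyY_add, applyY_add, hP, hQ]

/-- If `L` kills all polynomials of degree `≤ d`, only the monomials `x^a y^b` of `P` with
`|b| > d` contribute to `L(y_*).P`, and these have `|a| < e - d`. -/
lemma applyY_mem_degreeLE {P : MvPolynomial (Fin n ⊕ Fin n) R} {e d : ℤ}
    (hP : P ∈ degreeLE _ R e) (hL : ∀ G ∈ degreeLE (Fin n) R d, L G = 0) :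
    applyY L P ∈ degreeLE (Fin n) R (e - d - 1) := by
  refine Submodule.sum_mem _ fun m hm => ?_
  have hdeg := degree_sumFinsuppAddEquivProdFinsupp m
  by_cases hb : ((sumFinsuppAddEquivProdFinsupp m).2.degree : ℤ) ≤ d
  · rw [hL _ (monomial_mem_degreeLE hb 1), zero_mul, map_zero, zero_mul]
    exact zero_mem _
  · rw [C_mul_monomial]
    refine monomial_mem_degreeLE ?_ _
    have := mem_degreeLE.1 hP m hm
    omega

end ApplyY

section Cofactor

variable {S : Type*} [CommRing S] {m : ℕ} (D : Fin (m + 1) → Fin m → S)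

/-- The cofactor of the entry `(m, j)` in any `(m+1) × (m+1)` matrix whose first `m` rows
are `k ↦ (D 0 k, …, D m k)`. -/
def lastRowCofactor (j : Fin (m + 1)) : S :=
  (-1) ^ (m + j : ℕ) * (Matrix.of fun k i => D (j.succAbove i) k).det

lemma det_of_snoc (v : Fin (m + 1) → S) :
    (Matrix.of (Fin.snoc (α := fun _ => Fin (m + 1) → S) (fun k j => D j k) v)).det =
      ∑ j, v j * lastRowCofactor D j := by
  rw [Matrix.det_succ_row _ (Fin.last m)]
  refine sum_congr rfl fun j _ => ?_
  simp only [lastRowCofactor, Fin.val_last, Matrix.of_apply, Fin.snoc_last, Fin.succAbove_last]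
  rw [mul_assoc, mul_left_comm (v j)]
  congr 3
  ext k i
  simp

lemma sum_mul_lastRowCofactor_eq_zero (k : Fin m) : ∑ j, D j k * lastRowCofactor D j = 0 := by
  rw [← det_of_snoc]
  exact Matrix.det_zero_of_row_eq (Fin.castSucc_lt_last k).ne (funext fun i => by simp)

lemma sum_mul_lastRowCofactor_congr {v w : Fin (m + 1) → S} (c : Fin m → S)
    (h : ∀ j, v j - w j = ∑ k, c k * D j k) :
    ∑ j, v j * lastRowCofactor D j = ∑ j, w j * lastRowCofactor D j := by
  rw [← sub_eq_zero, ← sum_sub_distrib]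
  simp_rw [← sub_mul, h, sum_mul, mul_assoc]
  rw [sum_comm]
  simp_rw [← mul_sum, sum_mul_lastRowCofactor_eq_zero, mul_zero, sum_const_zero]

lemma lastRowCofactor_mem_degreeLE {σ R : Type*} [CommRing R]
    {D : Fin (m + 1) → Fin m → MvPolynomial σ R} (c : Fin (m + 1) → ℤ)
    (hD : ∀ j k, D j k ∈ degreeLE σ R (c j)) (j : Fin (m + 1)) :
    lastRowCofactor D j ∈ degreeLE σ R (∑ i, c i - c j) := by
  rw [Fin.sum_univ_succAbove c j, add_sub_cancel_left]
  exact neg_one_pow_mul_mem_degreeLE (det_mem_degreeLE _ _ fun k i => hD _ k) _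

end Cofactor

section Ddet

variable (f : Fin n → MvPolynomial (Fin n) R)
  (Df : Fin n → Fin n → MvPolynomial (Fin n ⊕ Fin n) R)
  (F : MvPolynomial (Fin n) R) (DF : Fin n → MvPolynomial (Fin n ⊕ Fin n) R)

lemma ddetX_eq_sum_toX_mul_lastRowCofactor :
    ddetX f Df F DF =
      ∑ j, toX (Fin.snoc (α := fun _ => _) f F j) *
        lastRowCofactor (Fin.snoc (α := fun _ => _) Df DF) j := by
  rw [← det_of_snoc, ddetX]
  congr 1
  ext k j
  induction k using Fin.lastCases <;> induction j using Fin.lastCases <;> simp [Fin.snoc]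

lemma ddetX_eq_sum_toY_mul_lastRowCofactor (hDf : ∀ i, IsDiffDeriv (f i) (Df i))
    (hDF : IsDiffDeriv F DF) :
    ddetX f Df F DF =
      ∑ j, toY (Fin.snoc (α := fun _ => _) f F j) *
        lastRowCofactor (Fin.snoc (α := fun _ => _) Df DF) j := by
  rw [ddetX_eq_sum_toX_mul_lastRowCofactor]
  refine sum_mul_lastRowCofactor_congr _ (fun k => X (Sum.inl k) - X (Sum.inr k)) fun j => ?_
  induction j using Fin.lastCases with
  | last => simpa using hDF.symm
  | cast i => simpa using (hDf i).symm

end Ddet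

section BoundedSpan

variable (f : Fin n → MvPolynomial (Fin n) R)

lemma sum_mul_mem_boundedSpan {d : ℤ} {g : Fin n → MvPolynomial (Fin n) R}
    (hg : ∀ i, g i ∈ degreeLE _ R (d - (f i).totalDegree)) :
    ∑ i, f i * g i ∈ boundedSpan f d := by
  refine ⟨g, rfl, fun i => ?_⟩
  calc mdeg (f i) + mdeg (g i)
      ≤ (((f i).totalDegree : ℤ) : WithBot ℤ) + ((d - (f i).totalDegree : ℤ) : WithBot ℤ) :=
        add_le_add (mdeg_le_coe_iff.2 (mem_degreeLE_totalDegree _)) (mdeg_le_coe_iff.2 (hg i))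
    _ = d := by rw [← WithBot.coe_add, add_sub_cancel]

lemma mul_mem_boundedSpan {d : ℤ} (i : Fin n) {g : MvPolynomial (Fin n) R}
    (hg : g ∈ degreeLE _ R (d - (f i).totalDegree)) : f i * g ∈ boundedSpan f d := by
  classical
  have h := sum_mul_mem_boundedSpan f (g := Pi.single i g) fun j => by
    rcases eq_or_ne j i with rfl | hj
    · simpa using hg
    · simp [hj]
  rwa [Fintype.sum_eq_single i fun j hj => by simp [hj], Pi.single_eq_same] at h

end BoundedSpan

section Extension

variable {f : Fin n → MvPolynomial (Fin n) R}
  {Df : Fin n → Fin n → MvPolynomial (Fin n ⊕ Fin n) R}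
  {F : MvPolynomial (Fin n) R} {DF : Fin n → MvPolynomial (Fin n ⊕ Fin n) R} {e : ℤ}

lemma lastRowCofactor_snoc_mem_degreeLE
    (hDf : ∀ i k, Df i k ∈ degreeLE _ R ((f i).totalDegree - 1))
    (hDF : ∀ k, DF k ∈ degreeLE _ R e) (j : Fin (n + 1)) :
    lastRowCofactor (Fin.snoc (α := fun _ => _) Df DF) j ∈ degreeLE _ R
      (deltaF f + e - Fin.snoc (α := fun _ => ℤ) (fun i => ((f i).totalDegree : ℤ) - 1) e j) :=
    by
  have h := lastRowCofactor_mem_degreeLE (D := Fin.snoc (α := fun _ => _) Df DF)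
    (Fin.snoc (α := fun _ => ℤ) (fun i => ((f i).totalDegree : ℤ) - 1) e) (fun j k => ?_) j
  · simpa only [Fin.sum_univ_castSucc, Fin.snoc_last, Fin.snoc_castSucc, deltaF] using h
  · induction j using Fin.lastCases with
    | last => simpa using hDF k
    | cast i => simpa using hDf i k

lemma applyY_ddetX_mem_degreeLE {a b : ℤ} (hab : deltaF f + e ≤ a + b) (hb : deltaF f ≤ b)
    (hDf : ∀ i k, Df i k ∈ degreeLE _ R ((f i).totalDegree - 1))
    (hDF : ∀ k, DF k ∈ degreeLE _ R e)
    (hfDf : ∀ i, IsDiffDeriv (f i) (Df i)) (hFDF : IsDiffDeriv F DF)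
    {L : MvPolynomial (Fin n) R →ₗ[R] R} (hL : Annuls L (boundedSpan f a)) :
    applyY L (ddetX f Df F DF) ∈ degreeLE (Fin n) R b := by
  rw [ddetX_eq_sum_toY_mul_lastRowCofactor f Df F DF hfDf hFDF, applyY_sum,
    Fin.sum_univ_castSucc]
  refine add_mem (Submodule.sum_mem _ fun i _ => ?_) ?_
  · rw [Fin.snoc_castSucc, applyY_toY_mul]
    refine degreeLE_mono ?_ (applyY_mem_degreeLE _
      (lastRowCofactor_snoc_mem_degreeLE hDf hDF _) (d := a - (f i).totalDegree)
      fun G hG => hL _ (mul_mem_boundedSpan f i hG))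
    simp only [Fin.snoc_castSucc]
    omega
  · rw [Fin.snoc_last, applyY_toY_mul]
    refine degreeLE_mono ?_ (applyY_mem_degreeLE _
      (lastRowCofactor_snoc_mem_degreeLE hDf hDF _) (d := -1)
      fun G hG => by rw [eq_zero_of_mem_degreeLE_of_neg hG (by norm_num), map_zero])
    simp only [Fin.snoc_last]
    omega

lemma applyY_ddetX_mem_boundedSpan {a b : ℤ} (hab : deltaF f + e ≤ a + b) (ha : deltaF f ≤ a)
    (hDf : ∀ i k, Df i k ∈ degreeLE _ R ((f i).totalDegree - 1))
    (hDF : ∀ k, DF k ∈ degreeLE _ R e)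
    {L : MvPolynomial (Fin n) R →ₗ[R] R} (hL : ∀ G ∈ degreeLE (Fin n) R a, L G = 0) :
    applyY L (ddetX f Df F DF) ∈ boundedSpan f b := by
  have hlast :
      applyY L (lastRowCofactor (Fin.snoc (α := fun _ => _) Df DF) (Fin.last n)) = 0 :=
    eq_zero_of_mem_degreeLE_of_neg
      (applyY_mem_degreeLE L (lastRowCofactor_snoc_mem_degreeLE hDf hDF _) hL)
      (by simp only [Fin.snoc_last]; omega)
  rw [ddetX_eq_sum_toX_mul_lastRowCofactor, applyY_sum, Fin.sum_univ_castSucc]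
  simp only [Fin.snoc_castSucc, Fin.snoc_last, applyY_toX_mul, hlast, mul_zero, add_zero]
  refine sum_mul_mem_boundedSpan f fun i => degreeLE_mono ?_
    (applyY_mem_degreeLE L (lastRowCofactor_snoc_mem_degreeLE hDf hDF _) hL)
  simp only [Fin.snoc_castSucc]
  omega

end Extension

theorem extension_independent_of_L_general {R : Type*} [CommRing R] {n : ℕ}
    (f : Fin n → MvPolynomial (Fin n) R)
    (δ₁ δ₂ : ℤ) (hδ₁ : 0 ≤ δ₁) (hδ₂ : 0 ≤ δ₂)
    (L₁ L₁' L₂ L₂' : MvPolynomial (Fin n) R →ₗ[R] R)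
    (hL₁ : Annuls L₁ (boundedSpan f ((deltaF f + δ₁ : ℤ) : WithBot ℤ)))
    (hL₂' : Annuls L₂' (boundedSpan f ((deltaF f + δ₂ : ℤ) : WithBot ℤ)))
    (hagree₁ : ∀ G : MvPolynomial (Fin n) R,
      mdeg G ≤ ((deltaF f + δ₁ : ℤ) : WithBot ℤ) → L₁' G = L₁ G)
    (hagree₂ : ∀ G : MvPolynomial (Fin n) R,
      mdeg G ≤ ((deltaF f + δ₂ : ℤ) : WithBot ℤ) → L₂' G = L₂ G)
    (Df : Fin n → Fin n → MvPolynomial (Fin n ⊕ Fin n) R)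
    (hDf : ∀ i, IsDiffDeriv (f i) (Df i) ∧ IsMonotonous (f i) (Df i))
    (F : MvPolynomial (Fin n) R)
    (hF : mdeg F ≤ ((deltaF f + δ₁ + δ₂ + 1 : ℤ) : WithBot ℤ))
    (DF : Fin n → MvPolynomial (Fin n ⊕ Fin n) R)
    (hDF : IsDiffDeriv F DF ∧ IsMonotonous F DF) :
    L₁' (applyY L₂' (ddetX f Df F DF)) = L₁ (applyY L₂ (ddetX f Df F DF)) := by
  have hDf_deg : ∀ i k, Df i k ∈ degreeLE _ R ((f i).totalDegree - 1) := fun i =>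
    (hDf i).2.mem_degreeLE <| by
      rw [sub_add_cancel]
      exact mdeg_le_coe_iff.2 (mem_degreeLE_totalDegree _)
  have hDF_deg : ∀ k, DF k ∈ degreeLE _ R (deltaF f + δ₁ + δ₂) := hDF.2.mem_degreeLE hF
  have hdeg : applyY L₂' (ddetX f Df F DF) ∈ degreeLE _ R (deltaF f + δ₁) :=
    applyY_ddetX_mem_degreeLE (a := deltaF f + δ₂) (b := deltaF f + δ₁) (by omega) (by omega)
      hDf_deg hDF_deg (fun i => (hDf i).1) hDF.1 hL₂'
  have hspan : applyY (L₂' - L₂) (ddetX f Df F DF) ∈ boundedSpan f (deltaF f + δ₁) :=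
    applyY_ddetX_mem_boundedSpan (a := deltaF f + δ₂) (b := deltaF f + δ₁) (by omega) (by omega)
      hDf_deg hDF_deg fun G hG => by
        rw [LinearMap.sub_apply, hagree₂ G (mdeg_le_coe_iff.2 hG), sub_self]
  calc L₁' (applyY L₂' (ddetX f Df F DF))
      = L₁ (applyY L₂' (ddetX f Df F DF)) := hagree₁ _ (mdeg_le_coe_iff.2 hdeg)
    _ = L₁ (applyY L₂ (ddetX f Df F DF)) + L₁ (applyY (L₂' - L₂) (ddetX f Df F DF)) := by
      rw [applyY_sub, map_sub, add_sub_cancel]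
    _ = L₁ (applyY L₂ (ddetX f Df F DF)) := by rw [hL₁ _ hspan, add_zero]

/-- Theorem 3.3: on polynomials of degree `≤ δ_f + δ₁ + δ₂ + 1`, the
extended functional depends only on the restriction of `L₁` to `R[x^{≤ δ_f + δ₁}]`
and of `L₂` to `R[x^{≤ δ_f + δ₂}]`. -/
theorem extension_independent_of_L {R : Type*} [CommRing R] {n : ℕ}
    (f : Fin n → MvPolynomial (Fin n) R) (hf : ∀ i, (1 : WithBot ℤ) ≤ mdeg (f i))
    (δ₁ δ₂ : ℤ) (hδ₁ : 0 ≤ δ₁) (hδ₂ : 0 ≤ δ₂)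
    (L₁ L₁' L₂ L₂' : MvPolynomial (Fin n) R →ₗ[R] R)
    (hL₁ : Annuls L₁ (boundedSpan f ((deltaF f + δ₁ : ℤ) : WithBot ℤ)))
    (hL₁' : Annuls L₁' (boundedSpan f ((deltaF f + δ₁ : ℤ) : WithBot ℤ)))
    (hL₂ : Annuls L₂ (boundedSpan f ((deltaF f + δ₂ : ℤ) : WithBot ℤ)))
    (hL₂' : Annuls L₂' (boundedSpan f ((deltaF f + δ₂ : ℤ) : WithBot ℤ)))
    (hagree₁ : ∀ G : MvPolynomial (Fin n) R,
      mdeg G ≤ ((deltaF f + δ₁ : ℤ) : WithBot ℤ) → L₁' G = L₁ G)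
    (hagree₂ : ∀ G : MvPolynomial (Fin n) R,
      mdeg G ≤ ((deltaF f + δ₂ : ℤ) : WithBot ℤ) → L₂' G = L₂ G)
    (Df : Fin n → Fin n → MvPolynomial (Fin n ⊕ Fin n) R)
    (hDf : ∀ i, IsDiffDeriv (f i) (Df i) ∧ IsMonotonous (f i) (Df i))
    (F : MvPolynomial (Fin n) R)
    (hF : mdeg F ≤ ((deltaF f + δ₁ + δ₂ + 1 : ℤ) : WithBot ℤ))
    (DF : Fin n → MvPolynomial (Fin n ⊕ Fin n) R)
    (hDF : IsDiffDeriv F DF ∧ IsMonotonous F DF) :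
    L₁' (applyY L₂' (ddetX f Df F DF)) = L₁ (applyY L₂ (ddetX f Df F DF)) :=
  extension_independent_of_L_general f δ₁ δ₂ hδ₁ hδ₂ L₁ L₁' L₂ L₂' hL₁ hL₂' hagree₁ hagree₂ Df hDf F
    hF DF hDF

end
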